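/- (Termination of the backtracking line search.) Suppose f : ℝ^N → ℝ is continuously differentiable with gradient ∇f Lipschitz continuous with constant ζ > 0. Let c ∈ (0,1), τ ∈ (0,1), let u ∈ ℝ^N, let Φ ≥ 0, and let p ∈ ℝ^N be a nonzero direction satisfying ⟨∇f(u), p⟩ = −Φ² with Φ > 0. Then there exists j ∈ ℕ such that the step-length γ = τʲ satisfies the Armijo condition f(u + γp) ≤ f(u) − c·γ·Φ² together with the lower bound γ ≥ min(1, 2(1 − c)τΦ² / (ζ‖p‖²)). -/

import Mathlib

open RealInnerProductSpace

/-! Along the ray `t ↦ u + t • p` the slope of `f` drifts from `⟪∇f u, p⟫` by at most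
`ζ t ‖p‖²`, which integrates to the quadratic upper bound
`f (u + γ • p) ≤ f u + γ ⟪∇f u, p⟫ + ζ γ² ‖p‖² / 2`. With `⟪∇f u, p⟫ = -Φ²` this gives the
Armijo condition for every step `γ ≤ γ̄ := 2 (1 - c) Φ² / (ζ ‖p‖²)`. Backtracking stops at the
first power `τ ^ j ≤ γ̄`; either `j = 0`, or the previous power exceeded `γ̄`, so `τ ^ j > τ γ̄`. -/

section Descent

variable {E : Type*} [NormedAddCommGroup E] [InnerProductSpace ℝ E] [CompleteSpace E]
  {f : E → ℝ}

theorem DifferentiableAt.hasDerivAt_comp_add_smul {u p : E} {t : ℝ}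
    (hf : DifferentiableAt ℝ f (u + t • p)) :
    HasDerivAt (fun s : ℝ => f (u + s • p)) ⟪gradient f (u + t • p), p⟫ t := by
  have hline : HasDerivAt (fun s : ℝ => u + s • p) p t := by
    simpa using ((hasDerivAt_id t).smul_const p).const_add u
  have hcomp := hf.hasGradientAt.hasFDerivAt.comp_hasDerivAt t hline
  rw [InnerProductSpace.toDual_apply_apply] at hcomp
  exact hcomp

theorem inner_gradient_add_smul_sub_le {ζ : ℝ}
    (hlip : ∀ x y : E, ‖gradient f x - gradient f y‖ ≤ ζ * ‖x - y‖) (u p : E) {t : ℝ}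
    (ht : 0 ≤ t) :
    ⟪gradient f (u + t • p), p⟫ - ⟪gradient f u, p⟫ ≤ ζ * t * ‖p‖ ^ 2 :=
  calc ⟪gradient f (u + t • p), p⟫ - ⟪gradient f u, p⟫
      = ⟪gradient f (u + t • p) - gradient f u, p⟫ := (inner_sub_left _ _ _).symm
    _ ≤ ‖gradient f (u + t • p) - gradient f u‖ * ‖p‖ := real_inner_le_norm _ _
    _ ≤ ζ * ‖(u + t • p) - u‖ * ‖p‖ := by gcongr; exact hlip _ _
    _ = ζ * t * ‖p‖ ^ 2 := by
      rw [add_sub_cancel_left, norm_smul, Real.norm_of_nonneg ht]; ring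

theorem apply_add_smul_le_of_gradient_lipschitz (hf : Differentiable ℝ f) {ζ : ℝ}
    (hlip : ∀ x y : E, ‖gradient f x - gradient f y‖ ≤ ζ * ‖x - y‖) (u p : E) {γ : ℝ}
    (hγ : 0 ≤ γ) :
    f (u + γ • p) ≤ f u + γ * ⟪gradient f u, p⟫ + ζ * γ ^ 2 * ‖p‖ ^ 2 / 2 := by
  set gap : ℝ → ℝ := fun t =>
    f u + t * ⟪gradient f u, p⟫ + ζ * t ^ 2 * ‖p‖ ^ 2 / 2 - f (u + t • p)
  have hgap : ∀ t, HasDerivAt gap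
      (⟪gradient f u, p⟫ + ζ * t * ‖p‖ ^ 2 - ⟪gradient f (u + t • p), p⟫) t := by
    intro t
    have hquad : HasDerivAt (fun s : ℝ => f u + s * ⟪gradient f u, p⟫ + ζ * s ^ 2 * ‖p‖ ^ 2 / 2)
        (⟪gradient f u, p⟫ + ζ * t * ‖p‖ ^ 2) t := by
      have hsum : HasDerivAt
          (fun s : ℝ => f u + s * ⟪gradient f u, p⟫ + ζ * s ^ 2 * ‖p‖ ^ 2 / 2)
          (1 * ⟪gradient f u, p⟫ + ζ * (2 * t ^ 1) * ‖p‖ ^ 2 / 2) t :=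
        (((hasDerivAt_id t).mul_const _).const_add (f u)).add
          ((((hasDerivAt_pow 2 t).const_mul ζ).mul_const _).div_const 2)
      convert hsum using 1
      ring
    exact hquad.sub (hf _).hasDerivAt_comp_add_smul
  have hmono : MonotoneOn gap (Set.Ici 0) := by
    refine monotoneOn_of_hasDerivWithinAt_nonneg (convex_Ici 0)
      (fun t _ => (hgap t).continuousAt.continuousWithinAt)
      (fun t _ => (hgap t).hasDerivWithinAt) fun t ht => ?_
    rw [interior_Ici] at ht
    linarith [inner_gradient_add_smul_sub_le hlip u p (le_of_lt ht)]
  have hgap0 : gap 0 = 0 := by simp [gap]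
  have hgapγ : 0 ≤ gap γ := hgap0 ▸ hmono Set.self_mem_Ici hγ hγ
  exact sub_nonneg.1 hgapγ

theorem armijo_of_mul_norm_sq_le (hf : Differentiable ℝ f) {ζ : ℝ}
    (hlip : ∀ x y : E, ‖gradient f x - gradient f y‖ ≤ ζ * ‖x - y‖) {u p : E} {c Φ γ : ℝ}
    (hgrad : ⟪gradient f u, p⟫ = -Φ ^ 2) (hγ : 0 ≤ γ)
    (hstep : ζ * γ * ‖p‖ ^ 2 ≤ 2 * (1 - c) * Φ ^ 2) :
    f (u + γ • p) ≤ f u - c * γ * Φ ^ 2 := by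
  have hdescent := apply_add_smul_le_of_gradient_lipschitz hf hlip u p hγ
  rw [hgrad] at hdescent
  nlinarith [mul_le_mul_of_nonneg_left hstep hγ]

end Descent

theorem exists_pow_le_and_min_le_pow {τ γ : ℝ} (hτ : τ ∈ Set.Ioo 0 1) (hγ : 0 < γ) :
    ∃ j : ℕ, τ ^ j ≤ γ ∧ min 1 (τ * γ) ≤ τ ^ j := by
  rcases le_or_gt 1 γ with h1 | h1
  · exact ⟨0, by simpa using h1, by simp⟩
  · obtain ⟨n, hlt, hle⟩ := exists_nat_pow_near_of_lt_one hγ h1.le hτ.1 hτ.2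
    refine ⟨n + 1, hlt.le, min_le_of_right_le ?_⟩
    rw [pow_succ']
    exact mul_le_mul_of_nonneg_left hle hτ.1.le

theorem backtracking_terminates_general {N : ℕ} (f : EuclideanSpace ℝ (Fin N) → ℝ)
    (hf : ContDiff ℝ 1 f) (ζ : ℝ) (hζ : 0 < ζ)
    (hlip : ∀ u w : EuclideanSpace ℝ (Fin N),
      ‖gradient f u - gradient f w‖ ≤ ζ * ‖u - w‖)
    (c τ : ℝ) (hc : c ∈ Set.Ioo (0 : ℝ) 1) (hτ : τ ∈ Set.Ioo (0 : ℝ) 1)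
    (u p : EuclideanSpace ℝ (Fin N)) (hpne : p ≠ 0)
    (Φ : ℝ) (hΦ : 0 < Φ)
    (hgrad : ⟪gradient f u, p⟫ = -Φ ^ 2) :
    ∃ j : ℕ,
      f (u + τ ^ j • p) ≤ f u - c * τ ^ j * Φ ^ 2 ∧
      min 1 (2 * (1 - c) * τ * Φ ^ 2 / (ζ * ‖p‖ ^ 2)) ≤ τ ^ j := by
  have hcurv : 0 < ζ * ‖p‖ ^ 2 := by have := norm_pos_iff.mpr hpne; positivity
  have hγbar : 0 < 2 * (1 - c) * Φ ^ 2 / (ζ * ‖p‖ ^ 2) :=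
    div_pos (by nlinarith [hc.2, pow_pos hΦ 2]) hcurv
  obtain ⟨j, hj_le, hj_ge⟩ := exists_pow_le_and_min_le_pow hτ hγbar
  refine ⟨j, armijo_of_mul_norm_sq_le (hf.differentiable one_ne_zero) hlip hgrad
    (pow_nonneg hτ.1.le j) ?_, ?_⟩
  · linarith [(le_div_iff₀ hcurv).1 hj_le]
  · convert hj_ge using 2
    ring

/-- Termination of the backtracking line search: if `f` is continuously
differentiable with `ζ`-Lipschitz gradient, `c, τ ∈ (0,1)`, `p ≠ 0` and
`⟪∇f(u), p⟫ = −Φ²` with `Φ > 0`, then some step-length `γ = τʲ` satisfies the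
Armijo condition `f(u + γp) ≤ f(u) − cγΦ²` together with the lower bound
`γ ≥ min(1, 2(1 − c)τΦ² / (ζ‖p‖²))`. -/
theorem backtracking_terminates {N : ℕ} (f : EuclideanSpace ℝ (Fin N) → ℝ)
    (hf : ContDiff ℝ 1 f) (ζ : ℝ) (hζ : 0 < ζ)
    (hlip : ∀ u w : EuclideanSpace ℝ (Fin N),
      ‖gradient f u - gradient f w‖ ≤ ζ * ‖u - w‖)
    (c τ : ℝ) (hc : c ∈ Set.Ioo (0 : ℝ) 1) (hτ : τ ∈ Set.Ioo (0 : ℝ) 1)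
    (u p : EuclideanSpace ℝ (Fin N)) (hpne : p ≠ 0)
    (Φ : ℝ) (hΦ0 : 0 ≤ Φ) (hΦ : 0 < Φ)
    (hgrad : ⟪gradient f u, p⟫ = -Φ ^ 2) :
    ∃ j : ℕ,
      f (u + τ ^ j • p) ≤ f u - c * τ ^ j * Φ ^ 2 ∧
      min 1 (2 * (1 - c) * τ * Φ ^ 2 / (ζ * ‖p‖ ^ 2)) ≤ τ ^ j :=
  backtracking_terminates_general f hf ζ hζ hlip c τ hc hτ u p hpne Φ hΦ hgrad
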